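/- Let 𝔪 = Δ₁ + ⋯ + Δ_N be a multisegment of integer segments and let n(Δ) denote the multiplicity of a segment Δ in 𝔪. Suppose that for every segment Δ contained in supp 𝔪 with Δ − 1 also contained in supp 𝔪, both of the following hold: (a) there exists a matching function from X_{Δ−1;𝔪} = {i : (Δ−1) ≺ Δ_i} to Y_{Δ−1;𝔪} = {i : (Δ−2) ≺ Δ_i} for the relation j ↝ i iff Δ_j ≺ Δ_i, and (b) there exists a matching function from X̃_{Δ;𝔪} = {i : Δ_i ≺ Δ} to Ỹ_{Δ;𝔪} = {i : (Δ_i − 1) ≺ Δ} for the relation j ↝ i iff Δ_i ≺ Δ_j. Then n(Δ − 1) = n(Δ) for every segment Δ with Δ ⊆ supp 𝔪 and Δ − 1 ⊆ supp 𝔪. -/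

import Mathlib

/-- A segment `[a, b]` of integers (meaningful when `a ≤ b`). -/
structure Seg where
  a : ℤ
  b : ℤ
deriving DecidableEq

/-- `Δ` is a genuine segment, i.e. `a ≤ b`. -/
def Seg.IsSeg (Δ : Seg) : Prop := Δ.a ≤ Δ.b

/-- Containment of segments `Δ ⊆ Δ'`. -/
def Seg.Sub (Δ Δ' : Seg) : Prop := Δ'.a ≤ Δ.a ∧ Δ.b ≤ Δ'.b

/-- `Δ` and `Δ'` are linked: their union is again a segment (interval) but neither is
contained in the other. -/
def Seg.Linked (Δ Δ' : Seg) : Prop :=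
  max Δ.a Δ'.a ≤ min Δ.b Δ'.b + 1 ∧ ¬ Δ.Sub Δ' ∧ ¬ Δ'.Sub Δ

/-- `Δ` precedes `Δ'` (`Δ ≺ Δ'`): they are linked and `Δ` starts strictly earlier. -/
def Seg.Prec (Δ Δ' : Seg) : Prop := Δ.Linked Δ' ∧ Δ.a < Δ'.a

/-- The shifted segment `Δ - 1 = [a-1, b-1]`. -/
def Seg.shift (Δ : Seg) : Seg := ⟨Δ.a - 1, Δ.b - 1⟩

/-- There exists a matching function from `X` into `Y` for the relation `R`
(read `R q p` as `q ↝ p`): an injective `f : X → Y` with `f p ↝ p` for all `p ∈ X`. -/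
def ExistsMatching {ι : Type*} (X Y : Set ι) (R : ι → ι → Prop) : Prop :=
  ∃ f : X → Y, Function.Injective f ∧ ∀ p : X, R (f p : ι) (p : ι)

/-- `Δ` is contained in the support (union of segments) of the multisegment
`𝔪 = (Δ₀, …, Δ_{N-1})`. -/
def SubSupp (N : ℤ) (m : ℤ → Seg) (Δ : Seg) : Prop :=
  ∀ c : ℤ, Δ.a ≤ c → c ≤ Δ.b → ∃ i : ℤ, 0 ≤ i ∧ i < N ∧ (m i).a ≤ c ∧ c ≤ (m i).b

lemma Seg.shift_prec_self (Δ : Seg) (h : Δ.IsSeg) : Δ.shift.Prec Δ := by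
  obtain ⟨a, b⟩ := Δ
  simp only [Seg.IsSeg, Seg.Prec, Seg.Linked, Seg.Sub, Seg.shift] at *
  omega

lemma Seg.pinLC (Δ s : Seg) (h1 : Δ.shift.shift.Prec s) (h2 : s.Prec Δ) : s = Δ.shift := by
  obtain ⟨sa, sb⟩ := s; obtain ⟨a, b⟩ := Δ
  simp only [Seg.Prec, Seg.Linked, Seg.Sub, Seg.shift, Seg.mk.injEq] at *
  omega

lemma Seg.pinRC (Δ s : Seg) (h1 : Δ.shift.Prec s) (h2 : s.shift.Prec Δ) : s = Δ := by
  obtain ⟨sa, sb⟩ := s; obtain ⟨a, b⟩ := Δ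
  simp only [Seg.Prec, Seg.Linked, Seg.Sub, Seg.shift, Seg.mk.injEq] at *
  omega

/-- Combinatorial core of the classification of saturated representations: if for every
segment `Δ` with `Δ ⊆ supp 𝔪` and `Δ − 1 ⊆ supp 𝔪` both matching conditions
`LC(Δ−1, 𝔪)` and `RC(Δ, 𝔪)` hold, then the multiplicity of `Δ − 1` in `𝔪` equals the
multiplicity of `Δ` for every such `Δ`. -/
theorem saturated_multiplicities (N : ℤ) (m : ℤ → Seg)
    (hm : ∀ i, 0 ≤ i → i < N → (m i).IsSeg)
    (H : ∀ Δ : Seg, Δ.IsSeg → SubSupp N m Δ → SubSupp N m Δ.shift →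
      ExistsMatching {i : ℤ | 0 ≤ i ∧ i < N ∧ Δ.shift.Prec (m i)}
          {i : ℤ | 0 ≤ i ∧ i < N ∧ Δ.shift.shift.Prec (m i)}
          (fun j i => (m j).Prec (m i)) ∧
      ExistsMatching {i : ℤ | 0 ≤ i ∧ i < N ∧ (m i).Prec Δ}
          {i : ℤ | 0 ≤ i ∧ i < N ∧ (m i).shift.Prec Δ}
          (fun j i => (m i).Prec (m j))) :
    ∀ Δ : Seg, Δ.IsSeg → SubSupp N m Δ → SubSupp N m Δ.shift →
      ((Finset.Icc 0 (N - 1)).filter (fun i => m i = Δ.shift)).card =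
        ((Finset.Icc 0 (N - 1)).filter (fun i => m i = Δ)).card := by
  intro Δ hΔ h1 h2
  classical
  obtain ⟨⟨f, finj, hf⟩, ⟨g, ginj, hg⟩⟩ := H Δ hΔ h1 h2
  have hps : Δ.shift.Prec Δ := Seg.shift_prec_self Δ hΔ
  apply le_antisymm
  · -- copies of Δ.shift ↦ copies of Δ, via g
    have hmem : ∀ i ∈ (Finset.Icc 0 (N - 1)).filter (fun i => m i = Δ.shift),
        i ∈ {i : ℤ | 0 ≤ i ∧ i < N ∧ (m i).Prec Δ} := by
      intro i hi
      simp only [Finset.mem_filter, Finset.mem_Icc] at hi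
      exact ⟨hi.1.1, by omega, by rw [hi.2]; exact hps⟩
    apply Finset.card_le_card_of_injOn
      (fun i => if h : i ∈ {i : ℤ | 0 ≤ i ∧ i < N ∧ (m i).Prec Δ} then (g ⟨i, h⟩ : ℤ) else i)
    · intro i hi
      have hx := hmem i hi
      simp only [Finset.mem_coe, Finset.mem_filter, Finset.mem_Icc] at hi ⊢
      rw [dif_pos hx]
      obtain ⟨hg0, hg1, hg2⟩ := (g ⟨i, hx⟩).2
      have hrel : (m i).Prec (m ((g ⟨i, hx⟩ : {i : ℤ | 0 ≤ i ∧ i < N ∧ (m i).shift.Prec Δ}) : ℤ)) := hg ⟨i, hx⟩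
      rw [hi.2] at hrel
      exact ⟨⟨hg0, by omega⟩, Seg.pinRC Δ _ hrel hg2⟩
    · intro i hi j hj hij
      have hxi := hmem i hi; have hxj := hmem j hj
      have hij' : (g ⟨i, hxi⟩ : ℤ) = (g ⟨j, hxj⟩ : ℤ) := by
        simpa only [dif_pos hxi, dif_pos hxj] using hij
      have : (⟨i, hxi⟩ : {i : ℤ | 0 ≤ i ∧ i < N ∧ (m i).Prec Δ}) = ⟨j, hxj⟩ :=
        ginj (Subtype.coe_injective hij')
      exact congrArg Subtype.val this
  · -- copies of Δ ↦ copies of Δ.shift, via f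
    have hmem : ∀ i ∈ (Finset.Icc 0 (N - 1)).filter (fun i => m i = Δ),
        i ∈ {i : ℤ | 0 ≤ i ∧ i < N ∧ Δ.shift.Prec (m i)} := by
      intro i hi
      simp only [Finset.mem_filter, Finset.mem_Icc] at hi
      exact ⟨hi.1.1, by omega, by rw [hi.2]; exact hps⟩
    apply Finset.card_le_card_of_injOn
      (fun i => if h : i ∈ {i : ℤ | 0 ≤ i ∧ i < N ∧ Δ.shift.Prec (m i)} then (f ⟨i, h⟩ : ℤ) else i)
    · intro i hi
      have hx := hmem i hi
      simp only [Finset.mem_coe, Finset.mem_filter, Finset.mem_Icc] at hi ⊢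
      rw [dif_pos hx]
      obtain ⟨hf0, hf1, hf2⟩ := (f ⟨i, hx⟩).2
      have hrel : (m ((f ⟨i, hx⟩ : {i : ℤ | 0 ≤ i ∧ i < N ∧ Δ.shift.shift.Prec (m i)}) : ℤ)).Prec (m i) := hf ⟨i, hx⟩
      rw [hi.2] at hrel
      exact ⟨⟨hf0, by omega⟩, Seg.pinLC Δ _ hf2 hrel⟩
    · intro i hi j hj hij
      have hxi := hmem i hi; have hxj := hmem j hj
      have hij' : (f ⟨i, hxi⟩ : ℤ) = (f ⟨j, hxj⟩ : ℤ) := by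
        simpa only [dif_pos hxi, dif_pos hxj] using hij
      have : (⟨i, hxi⟩ : {i : ℤ | 0 ≤ i ∧ i < N ∧ Δ.shift.Prec (m i)}) = ⟨j, hxj⟩ :=
        finj (Subtype.coe_injective hij')
      exact congrArg Subtype.val this
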